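/- arXiv:0908.4407 — 4 statements merged into one kernel-verified Lean document; each statement's English description precedes it below -/
import Mathlib

section
/- Let H be an impartial game such that every option of H has the empty game 0 among its options, and suppose that H is a misère win for the player to move. Then H is misère-indistinguishable from the empty game 0: for every impartial game T, the games H + T and T are both misère wins or both misère losses. -/
/-- An impartial game: a position is given by the list of its options
(the positions reachable in one move); both players have the same moves. -/
inductive Game : Type
  | node : List Game → Game

namespace Game

/-- The options of a position. -/
def options : Game → List Game
  | node l => l

/-- Disjunctive sum of two games: a move is made in exactly one component. -/
def add : Game → Game → Game
  | node l, node r =>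
      node ((l.attach.map fun x => add x.1 (node r)) ++
            (r.attach.map fun y => add (node l) y.1))
termination_by g h => sizeOf g + sizeOf h
decreasing_by
  · have := List.sizeOf_lt_of_mem x.2; simp_wf; (try simp only [Game.node.sizeOf_spec] at *); omega
  · have := List.sizeOf_lt_of_mem y.2; simp_wf; (try simp only [Game.node.sizeOf_spec] at *); omega

/-- Misère win (for the player to move): the game has no options,
or some option is a misère loss. -/
def MisereWin : Game → Prop
  | node l => l = [] ∨ ∃ x : {a // a ∈ l}, ¬ MisereWin x.1
decreasing_by
  simp_wf; have := List.sizeOf_lt_of_mem x.2; omega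

/-- Misère indistinguishability: adding any game `T` yields the same misère outcome. -/
def Indist (G H : Game) : Prop :=
  ∀ T : Game, MisereWin (add G T) ↔ MisereWin (add H T)

/-- The Nim-heap of size `n`, whose options are `nim 0, …, nim (n-1)`. -/
def nim : ℕ → Game
  | 0 => node []
  | n + 1 => node ((nim n).options ++ [nim n])

/-- Normal-play win (for the player to move): some option is a normal-play loss.
A player unable to move loses. -/
def NormalWin : Game → Prop
  | node l => ∃ x : {a // a ∈ l}, ¬ NormalWin x.1
decreasing_by
  simp_wf; have := List.sizeOf_lt_of_mem x.2; omega

/-- The Grundy value: the mex of the Grundy values of the options. -/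
noncomputable def grundy : Game → ℕ
  | node l => sInf {n : ℕ | ∀ x : {a // a ∈ l}, grundy x.1 ≠ n}
decreasing_by
  simp_wf; have := List.sizeOf_lt_of_mem x.2; omega

/-- The height of a game: the maximal number of moves in a play from it. -/
def height : Game → ℕ
  | node l => (l.attach.map fun x => height x.1 + 1).foldr max 0
decreasing_by
  simp_wf; have := List.sizeOf_lt_of_mem x.2; omega

/-- A canonical tree: duplicate options are removed, hereditarily. -/
def Canonical : Game → Prop
  | node l => l.Nodup ∧ ∀ x : {a // a ∈ l}, Canonical x.1
decreasing_by
  simp_wf; have := List.sizeOf_lt_of_mem x.2; omega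

/-- Extensional (set-theoretic) equality of game trees. -/
def ExtEq : Game → Game → Prop
  | node l, node r =>
      (∀ x : {a // a ∈ l}, ∃ y : {b // b ∈ r}, ExtEq x.1 y.1) ∧
      (∀ y : {b // b ∈ r}, ∃ x : {a // a ∈ l}, ExtEq x.1 y.1)
termination_by g _ => sizeOf g
decreasing_by
  · have := List.sizeOf_lt_of_mem x.2; simp_wf; (try simp only [Game.node.sizeOf_spec] at *); omega
  · have := List.sizeOf_lt_of_mem x.2; simp_wf; (try simp only [Game.node.sizeOf_spec] at *); omega

/-- The disjunctive sum of `n` copies of a game. -/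
def copies : ℕ → Game → Game
  | 0, _ => node []
  | n + 1, g => add g (copies n g)

/-- `G` is a reducer of `H` if `H` is obtained from `G` by adding reversible
moves `R₁, R₂, …`: the options of `H` are those of `G` together with the `Rⱼ`,
each `Rⱼ` having `G` among its options; when `G` is empty one additionally
requires `H` to be a misère win. -/
def Reducer (G H : Game) : Prop :=
  ∃ Rs : List Game,
    (∀ x, x ∈ H.options ↔ x ∈ G.options ∨ x ∈ Rs) ∧
    (∀ R ∈ Rs, G ∈ R.options) ∧
    (G.options = [] → MisereWin H)

/-- A canonical tree is reduced if its only reducer is itself (as a set of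
options) and all of its options are reduced. -/
def Reduced : Game → Prop
  | node l =>
      (∀ G, Reducer G (node l) → ∀ x, x ∈ G.options ↔ x ∈ l) ∧
      ∀ x : {a // a ∈ l}, Reduced x.1
decreasing_by
  simp_wf; have := List.sizeOf_lt_of_mem x.2; omega

end Game

/-!
Induction on `T`. A move from `H + T` to `x + T`, with `x` an option of `H`, is reversed by
moving `x` to `0`, which leads back to `T`; hence if `x + T` is a misère loss, `T` is a
misère win. Moves in `T` are matched by the induction hypothesis, and for `T = 0` the claim
is just that `H` is a misère win.
-/

namespace Game

theorem moveInduction {P : Game → Prop} (step : ∀ G : Game, (∀ x ∈ G.options, P x) → P G) :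
    ∀ G, P G
  | node l => step (node l) fun x (_hx : x ∈ l) => moveInduction step x
decreasing_by
  have := List.sizeOf_lt_of_mem _hx; simp_wf; omega

theorem misereWin_iff (G : Game) :
    MisereWin G ↔ G.options = [] ∨ ∃ x ∈ G.options, ¬ MisereWin x := by
  cases G with
  | node l => rw [MisereWin]; simp [options]

theorem MisereWin.of_mem_options {G x : Game} (hx : x ∈ G.options) (hnx : ¬ MisereWin x) :
    MisereWin G :=
  (misereWin_iff G).mpr (Or.inr ⟨x, hx, hnx⟩)

theorem mem_options_add {G T g : Game} :
    g ∈ (add G T).options ↔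
      (∃ x ∈ G.options, g = add x T) ∨ (∃ t ∈ T.options, g = add G t) := by
  cases G with
  | node l =>
    cases T with
    | node r =>
      rw [add]
      simp [options, eq_comm]

theorem options_add_eq_nil {G T : Game} :
    (add G T).options = [] ↔ G.options = [] ∧ T.options = [] := by
  cases G with
  | node l =>
    cases T with
    | node r =>
      rw [add]
      simp [options]

theorem misereWin_map_iff {f : Game → Game}
    (hf : ∀ G y, y ∈ (f G).options ↔ ∃ x ∈ G.options, y = f x) (G : Game) :
    MisereWin (f G) ↔ MisereWin G := by
  induction G using moveInduction with
  | step G ih =>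
    have hnil : (f G).options = [] ↔ G.options = [] := by
      simp only [List.eq_nil_iff_forall_not_mem, hf]
      grind
    rw [misereWin_iff, misereWin_iff G, hnil]
    simp only [hf]
    grind

theorem misereWin_add_zero (G : Game) : MisereWin (add G (node [])) ↔ MisereWin G :=
  misereWin_map_iff (f := (add · (node [])))
    (fun _ _ => by rw [mem_options_add]; simp [options]) G

theorem misereWin_zero_add (T : Game) : MisereWin (add (node []) T) ↔ MisereWin T :=
  misereWin_map_iff (f := add (node []))
    (fun _ _ => by rw [mem_options_add]; simp [options]) T

end Game

open Game in
/-- If every option of `H` has the empty game `0` among its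
options and `H` is a misère win, then `H` is misère-indistinguishable from
the empty game: for every `T`, `H + T` and `T` have the same misère outcome. -/
theorem stmt1 (H : Game)
    (hrev : ∀ x ∈ H.options, Game.node [] ∈ x.options)
    (hwin : MisereWin H) :
    ∀ T : Game, (MisereWin (add H T) ↔ MisereWin T) := by
  intro T
  induction T using moveInduction with
  | step T ih =>
    constructor
    · intro hw
      rcases (misereWin_iff _).mp hw with hnil | ⟨g, hg, hng⟩
      · exact (misereWin_iff T).mpr (Or.inl (options_add_eq_nil.mp hnil).2)
      rcases mem_options_add.mp hg with ⟨x, hx, rfl⟩ | ⟨t, ht, rfl⟩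
      · have hback : add (node []) T ∈ (add x T).options :=
          mem_options_add.mpr (Or.inl ⟨node [], hrev x hx, rfl⟩)
        by_contra hT
        exact hng (.of_mem_options hback (mt (misereWin_zero_add T).mp hT))
      · exact .of_mem_options ht (mt (ih t ht).mpr hng)
    · intro hw
      rcases (misereWin_iff T).mp hw with hnil | ⟨t, ht, hnt⟩
      · obtain ⟨r⟩ := T
        obtain rfl : r = [] := hnil
        exact (misereWin_add_zero H).mpr hwin
      · exact .of_mem_options (mem_options_add.mpr (Or.inr ⟨t, ht, rfl⟩)) (mt (ih t ht).mp hnt)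
end

section
/- Let P be a nonempty impartial game each of whose options is misère-indistinguishable from some Nim-heap, say the options of P are misère-indistinguishable from nim a₁, nim a₂, …, and suppose that at least one of the numbers aᵢ is equal to 0 or 1. Then P is misère-indistinguishable from nim m, where m = mex{a₁, a₂, …} is the least natural number not occurring among the aᵢ. -/
/-!
Misère indistinguishability is a congruence for forming a position from its options, so `P` may be
replaced by the position whose options are the heaps `nim aᵢ`. That position and `nim m` have the same
moves below `m`, and every larger heap `nim aᵢ` can be reversed to `nim m`, which makes those options
harmless. The only remaining difference is at the end of play: when `m = 0`, the sum `nim 0 + 0` is a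
misère win, and the sum of our position with `0` is one too because, no `aᵢ` being `0`, some `aᵢ` is
`1` and `nim 1 + 0` is a misère loss.
-/

namespace Game

theorem ind {motive : Game → Prop}
    (h : ∀ l : List Game, (∀ x ∈ l, motive x) → motive (node l)) : ∀ g, motive g
  | node l => h l fun x _ => ind h x
decreasing_by simp_wf; have := List.sizeOf_lt_of_mem ‹x ∈ l›; omega

@[simp]
theorem options_node (l : List Game) : (node l).options = l := rfl

theorem misereWin_node_iff (l : List Game) :
    MisereWin (node l) ↔ l = [] ∨ ∃ x ∈ l, ¬ MisereWin x := by
  rw [MisereWin]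
  simp

theorem misereWin_add_iff (G H : Game) :
    MisereWin (add G H) ↔
      (G.options = [] ∧ H.options = []) ∨
      (∃ x ∈ G.options, ¬ MisereWin (add x H)) ∨
      (∃ y ∈ H.options, ¬ MisereWin (add G y)) := by
  cases G with | node l =>
  cases H with | node r =>
  simp [add, misereWin_node_iff, List.append_eq_nil_iff, or_and_right, exists_or]

theorem Indist.trans {G H K : Game} (h₁ : Indist G H) (h₂ : Indist H K) : Indist G K :=
  fun T => (h₁ T).trans (h₂ T)

theorem indist_of_options {G H : Game}
    (hGH : ∀ x ∈ G.options, ∃ y ∈ H.options, Indist x y)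
    (hHG : ∀ y ∈ H.options, ∃ x ∈ G.options, Indist x y) : Indist G H := by
  have hnil : G.options = [] ↔ H.options = [] := by
    simp only [List.eq_nil_iff_forall_not_mem]
    exact ⟨fun h y hy => let ⟨x, hx, _⟩ := hHG y hy; h x hx,
      fun h x hx => let ⟨y, hy, _⟩ := hGH x hx; h y hy⟩
  intro T
  induction T using ind with
  | h r ih =>
    rw [misereWin_add_iff, misereWin_add_iff, hnil]
    refine or_congr_right (or_congr ⟨?_, ?_⟩ (exists_congr fun t => and_congr_right fun ht => ?_))
    · rintro ⟨x, hx, hw⟩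
      obtain ⟨y, hy, hxy⟩ := hGH x hx
      exact ⟨y, hy, (hxy _).not.mp hw⟩
    · rintro ⟨y, hy, hw⟩
      obtain ⟨x, hx, hxy⟩ := hHG y hy
      exact ⟨x, hx, (hxy _).not.mpr hw⟩
    · exact (ih t ht).not

theorem mem_options_nim {n : ℕ} {x : Game} : x ∈ (nim n).options ↔ ∃ k < n, x = nim k := by
  induction n with
  | zero => simp [nim]
  | succ n ih =>
    simp only [nim, options_node, List.mem_append, List.mem_singleton, ih, Nat.lt_succ_iff_lt_or_eq,
      or_and_right, exists_or, exists_eq_left]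

theorem nim_options_eq_nil {n : ℕ} : (nim n).options = [] ↔ n = 0 := by
  simp only [List.eq_nil_iff_forall_not_mem, mem_options_nim]
  exact ⟨fun h => by_contra fun hn => h _ ⟨0, Nat.pos_of_ne_zero hn, rfl⟩,
    fun hn x ⟨k, hk, _⟩ => by omega⟩

theorem not_misereWin_add_nim_one_zero : ¬ MisereWin (add (nim 1) (nim 0)) := by
  rw [misereWin_add_iff]
  simp [mem_options_nim, nim_options_eq_nil, misereWin_add_iff (nim 0) (nim 0)]

theorem misereWin_add_of_not_misereWin_add {G H T : Game} (hH : H ∈ G.options)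
    (hG : ¬ MisereWin (add G T)) : MisereWin (add H T) :=
  by_contra fun hHT => hG ((misereWin_add_iff G T).mpr (Or.inr (Or.inl ⟨H, hH, hHT⟩)))

theorem indist_node_map_nim {α : Type*} (l : List α) (a : α → ℕ) (hne : l ≠ [])
    (h01 : ∃ x ∈ l, a x = 0 ∨ a x = 1) :
    Indist (node (l.map fun x => nim (a x))) (nim (sInf {n : ℕ | ∀ x ∈ l, a x ≠ n})) := by
  set m := sInf {n : ℕ | ∀ x ∈ l, a x ≠ n}
  have hm : ∀ x ∈ l, a x ≠ m := Nat.sInf_mem (s := {n : ℕ | ∀ x ∈ l, a x ≠ n})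
    ⟨(l.map a).sum + 1, fun x hx h => by
      have := List.le_sum_of_mem (List.mem_map_of_mem (f := a) hx); omega⟩
  have hlt : ∀ j < m, ∃ x ∈ l, a x = j := fun j hj => by
    simpa using Nat.notMem_of_lt_sInf hj
  intro T
  induction T using ind with
  | h r ih =>
    constructor
    · intro h
      rcases (misereWin_add_iff _ _).mp h with ⟨hl, -⟩ | ⟨_, hmem, hw⟩ | ⟨t, ht, hw⟩
      · exact absurd (List.map_eq_nil_iff.mp hl) hne
      · obtain ⟨x, hx, rfl⟩ := List.mem_map.mp hmem
        rcases (hm x hx).lt_or_gt with hxm | hxm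
        · exact (misereWin_add_iff _ _).mpr
            (Or.inr (Or.inl ⟨_, mem_options_nim.mpr ⟨a x, hxm, rfl⟩, hw⟩))
        · exact misereWin_add_of_not_misereWin_add (mem_options_nim.mpr ⟨m, hxm, rfl⟩) hw
      · exact (misereWin_add_iff _ _).mpr (Or.inr (Or.inr ⟨t, ht, (ih t ht).not.mp hw⟩))
    · intro h
      rcases (misereWin_add_iff _ _).mp h with ⟨hm0, hr⟩ | ⟨_, hmem, hw⟩ | ⟨t, ht, hw⟩
      · obtain ⟨x, hx, hx01⟩ := h01
        have hx1 : a x = 1 := hx01.resolve_left (nim_options_eq_nil.mp hm0 ▸ hm x hx)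
        obtain rfl : r = [] := hr
        refine (misereWin_add_iff _ _).mpr (Or.inr (Or.inl ⟨_, List.mem_map_of_mem hx, ?_⟩))
        rw [hx1]
        exact not_misereWin_add_nim_one_zero
      · obtain ⟨j, hj, rfl⟩ := mem_options_nim.mp hmem
        obtain ⟨x, hx, rfl⟩ := hlt j hj
        exact (misereWin_add_iff _ _).mpr (Or.inr (Or.inl ⟨_, List.mem_map_of_mem hx, hw⟩))
      · exact (misereWin_add_iff _ _).mpr (Or.inr (Or.inr ⟨t, ht, (ih t ht).not.mpr hw⟩))

end Game

open Game in
/-- If `P` is nonempty and each option of `P` is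
misère-indistinguishable from a Nim-heap `nim (a x)`, and some `a x` is `0`
or `1`, then `P` is misère-indistinguishable from `nim m` where `m` is the
mex (least excluded value) of the numbers `a x`. -/
theorem stmt2 (P : Game) (hne : P.options ≠ [])
    (a : Game → ℕ)
    (ha : ∀ x ∈ P.options, Indist x (nim (a x)))
    (h01 : ∃ x ∈ P.options, a x = 0 ∨ a x = 1) :
    Indist P (nim (sInf {n : ℕ | ∀ x ∈ P.options, a x ≠ n})) := by
  have hreplace : Indist P (node (P.options.map fun x => nim (a x))) :=
    indist_of_options (fun x hx => ⟨_, List.mem_map_of_mem hx, ha x hx⟩)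
      (by simpa using fun x hx => ⟨x, hx, ha x hx⟩)
  exact hreplace.trans (indist_node_map_nim P.options a hne h01)
end

section
/- Let H be a canonical tree obtained from a nonempty canonical tree G by adding reversible moves R₁, R₂, … (so the options of H are the options of G together with the Rⱼ, and each Rⱼ has G among its options). Then each Rⱼ has height at least height(G) + 1, and consequently the options of G are exactly those options of H whose height is at most height(G); hence every reducer of H is of the form {options of H of height less than some fixed value}. -/
/-! A move always lowers the height, so a reversible move `R`, which has `G` among its options,
satisfies `height G < height R`, whereas every option of `G` has height below `height G`.
The options of `G` are therefore exactly the options of `H` of height less than `height G + 1`. -/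

namespace Game

lemma height_lt_height_of_mem_options {x G : Game} (h : x ∈ G.options) :
    height x < height G := by
  obtain ⟨l⟩ := G
  rw [height]
  exact List.le_max_of_le' 0
    (List.mem_map_of_mem (f := fun y : {a // a ∈ l} => height y.1 + 1) (List.mem_attach l ⟨x, h⟩))
    le_rfl

lemma mem_options_iff_of_reversible {G H : Game} {Rs : List Game}
    (hopts : ∀ x, x ∈ H.options ↔ x ∈ G.options ∨ x ∈ Rs)
    (hrev : ∀ R ∈ Rs, G ∈ R.options) (x : Game) :
    x ∈ G.options ↔ x ∈ H.options ∧ height x < height G + 1 := by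
  refine ⟨fun hx => ⟨(hopts x).mpr (.inl hx), ?_⟩, fun ⟨hxH, hlt⟩ => ?_⟩
  · exact (height_lt_height_of_mem_options hx).trans (Nat.lt_succ_self _)
  · refine ((hopts x).mp hxH).resolve_right fun hxR => ?_
    exact absurd (height_lt_height_of_mem_options (hrev x hxR)) (by omega)

lemma Reducer.exists_mem_options_iff_height_lt {G H : Game} (h : Reducer G H) :
    ∃ b : ℕ, ∀ x, x ∈ G.options ↔ x ∈ H.options ∧ height x < b :=
  let ⟨_, hopts, hrev, _⟩ := h
  ⟨_, mem_options_iff_of_reversible hopts hrev⟩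

end Game

open Game in
theorem stmt7_general (G H : Game) (Rs : List Game)
    (hopts : ∀ x : Game, x ∈ H.options ↔ x ∈ G.options ∨ x ∈ Rs)
    (hrev : ∀ R ∈ Rs, G ∈ R.options) :
    (∀ R ∈ Rs, height G + 1 ≤ height R) ∧
    (∀ x : Game, x ∈ G.options ↔ (x ∈ H.options ∧ height x ≤ height G)) ∧
    (∀ G' : Game, Reducer G' H →
      ∃ b : ℕ, ∀ x : Game, x ∈ G'.options ↔ (x ∈ H.options ∧ height x < b)) :=
  ⟨fun R hR => height_lt_height_of_mem_options (hrev R hR),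
    fun x => by simpa only [Nat.lt_succ_iff] using mem_options_iff_of_reversible hopts hrev x,
    fun _ h => h.exists_mem_options_iff_height_lt⟩

open Game in
/-- If the canonical tree `H` is obtained from the nonempty
canonical tree `G` by adding reversible moves `R₁, R₂, …`, then each `Rⱼ` has
height at least `height G + 1`; consequently the options of `G` are exactly
the options of `H` of height at most `height G`, and every reducer of `H` is
of the form {options of `H` of height less than some fixed value}. -/
theorem stmt7 (G H : Game) (Rs : List Game)
    (hG : Canonical G) (hH : Canonical H)
    (hne : G.options ≠ [])
    (hopts : ∀ x : Game, x ∈ H.options ↔ x ∈ G.options ∨ x ∈ Rs)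
    (hrev : ∀ R ∈ Rs, G ∈ R.options) :
    (∀ R ∈ Rs, height G + 1 ≤ height R) ∧
    (∀ x : Game, x ∈ G.options ↔ (x ∈ H.options ∧ height x ≤ height G)) ∧
    (∀ G' : Game, Reducer G' H →
      ∃ b : ℕ, ∀ x : Game, x ∈ G'.options ↔ (x ∈ H.options ∧ height x < b)) :=
  stmt7_general G H Rs hopts hrev
end

section
/- The impartial game {*0; {*1; {*2}}} — i.e. the game whose two options are the empty game 0 and the game R, where R has options nim 1 and the game {*2} whose unique option is nim 2 — is misère-indistinguishable from nim 1. -/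
/-! A move from `G` to a position `R` that has `H` among its options is reversible through `H`,
so it can be dropped in misère play as long as `H` has options: if `R + T` is a misère loss, its
option `H + T` is a win, and since `H + T` has options it has a losing one, which is available
from `G + T` as well. In `{*0; {*1; {*2}}}` the move to `{*1; {*2}}` reverses through `*1 = {*0}`,
and dropping it leaves `*1`. -/

namespace Game

theorem misereWin_iff_exists_loss {G : Game} (hG : G.options ≠ []) :
    MisereWin G ↔ ∃ x ∈ G.options, ¬ MisereWin x := by
  simp only [misereWin_iff G, hG, false_or]

theorem options_add (G H : Game) :
    (add G H).options = G.options.map (add · H) ++ H.options.map (add G ·) := by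
  cases G; cases H
  rw [add, options, options, options, List.attach_map_val (f := (add · _)),
    List.attach_map_val (f := add _)]

theorem add_mem_options_add_left {G' G : Game} (h : G' ∈ G.options) (H : Game) :
    add G' H ∈ (add G H).options := by
  rw [options_add]
  exact List.mem_append_left _ (List.mem_map_of_mem h)

theorem misereWin_of_mem_options {G x : Game} (hG : ¬ MisereWin G) (hx : x ∈ G.options) :
    MisereWin x :=
  by_contra fun hx' => hG ((misereWin_iff G).2 (Or.inr ⟨x, hx, hx'⟩))

theorem options_add_ne_nil {G : Game} (hG : G.options ≠ []) (H : Game) :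
    (add G H).options ≠ [] := by
  simp [options_add, hG]

theorem exists_mem_options_add {G H : Game} {p : Game → Prop} :
    (∃ x ∈ (add G H).options, p x) ↔
      (∃ g ∈ G.options, p (add g H)) ∨ ∃ h ∈ H.options, p (add G h) := by
  simp only [options_add, List.mem_append, List.mem_map]
  aesop

theorem Reducer.misereWin_add_iff {G H : Game} (hHG : Reducer H G) (hH : H.options ≠ []) :
    ∀ T, MisereWin (add G T) ↔ MisereWin (add H T)
  | node t => by
    have ih (u) (hu : u ∈ t) : MisereWin (add G u) ↔ MisereWin (add H u) :=
      Reducer.misereWin_add_iff hHG hH u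
    obtain ⟨Rs, hmem, hrev, -⟩ := hHG
    have hG : G.options ≠ [] := List.ne_nil_of_mem ((hmem _).2 (Or.inl (List.head_mem hH)))
    have hHT := misereWin_iff_exists_loss (options_add_ne_nil hH (node t))
    rw [misereWin_iff_exists_loss (options_add_ne_nil hG _), hHT,
      exists_mem_options_add, exists_mem_options_add]
    constructor
    · rintro (⟨g, hg, hloss⟩ | ⟨u, hu, hloss⟩)
      · rcases (hmem g).1 hg with hg | hR
        · exact Or.inl ⟨g, hg, hloss⟩
        · have hwin : MisereWin (add H (node t)) :=
            misereWin_of_mem_options hloss (add_mem_options_add_left (hrev g hR) _)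
          rwa [hHT, exists_mem_options_add] at hwin
      · exact Or.inr ⟨u, hu, by rwa [← ih u hu]⟩
    · rintro (⟨g, hg, hloss⟩ | ⟨u, hu, hloss⟩)
      · exact Or.inl ⟨g, (hmem g).2 (Or.inl hg), hloss⟩
      · exact Or.inr ⟨u, hu, by rwa [ih u hu]⟩
termination_by T => sizeOf T
decreasing_by simp only [node.sizeOf_spec]; have := List.sizeOf_lt_of_mem hu; omega

theorem Reducer.indist {G H : Game} (hHG : Reducer H G) (hH : H.options ≠ []) : Indist G H :=
  hHG.misereWin_add_iff hH

end Game

open Game in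
/-- The game `{*0; {*1; {*2}}}` is misère-indistinguishable
from `nim 1`. -/
theorem stmt14 :
    Indist (Game.node [Game.node [], Game.node [nim 1, Game.node [nim 2]]]) (nim 1) := by
  refine Reducer.indist ⟨[node [nim 1, node [nim 2]]], fun x => ?_, ?_, ?_⟩ ?_ <;>
    simp [options, nim]
end
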